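/- arXiv:2212.04541 — 7 statements merged into one kernel-verified Lean document; each statement's English description precedes it below -/
import Mathlib

section
/- Let h : ℝ → ℝ be strictly convex at 0 on [0,1], i.e., h(s·x) < (1 − s)·h(0) + s·h(x) for all x ∈ (0,1] and all s ∈ (0,1), and suppose the right directional derivative exists: Tendsto (fun s => (h(s) − h(0))/s) (𝓝[>] 0) (𝓝 L). Then h(1) − h(0) > L. -/
/-!
Strict convexity at `0` makes the secant slope `(h t - h 0) / t` strictly increasing on `(0, 1]`.
A limit of slopes only gives a non-strict bound, so compare through `1 / 2`:
`L ≤ slope (1 / 2) < slope 1 = h 1 - h 0`.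
-/

open Filter Topology

theorem div_lt_div_of_strictConvexAtZero {h : ℝ → ℝ}
    (hconv : ∀ x ∈ Set.Ioc (0 : ℝ) 1, ∀ s ∈ Set.Ioo (0 : ℝ) 1,
      h (s * x) < (1 - s) * h 0 + s * h x)
    {t x : ℝ} (ht : 0 < t) (htx : t < x) (hx : x ≤ 1) :
    (h t - h 0) / t < (h x - h 0) / x := by
  have hx0 : 0 < x := ht.trans htx
  have hchord := hconv x ⟨hx0, hx⟩ (t / x) ⟨div_pos ht hx0, (div_lt_one hx0).2 htx⟩
  rw [div_mul_cancel₀ t hx0.ne'] at hchord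
  have hcleared : x * h t < (x - t) * h 0 + t * h x := by
    have := mul_lt_mul_of_pos_left hchord hx0
    field_simp at this
    linarith
  rw [div_lt_div_iff₀ ht hx0]
  linarith

/-- Strict gradient inequality for a function strictly convex at `0` on `[0,1]`
that is directionally differentiable at `0`. -/
theorem strict_gradient_inequality (h : ℝ → ℝ) (L : ℝ)
    (hconv : ∀ x ∈ Set.Ioc (0 : ℝ) 1, ∀ s ∈ Set.Ioo (0 : ℝ) 1,
      h (s * x) < (1 - s) * h 0 + s * h x)
    (hL : Tendsto (fun s => (h s - h 0) / s) (𝓝[>] 0) (𝓝 L)) :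
    h 1 - h 0 > L := by
  have hL_le : L ≤ (h (1 / 2) - h 0) / (1 / 2) := by
    apply le_of_tendsto hL
    filter_upwards [Ioo_mem_nhdsGT (by norm_num : (0 : ℝ) < 1 / 2)] with s hs
    exact (div_lt_div_of_strictConvexAtZero hconv hs.1 hs.2 (by norm_num)).le
  have hhalf_lt := div_lt_div_of_strictConvexAtZero hconv (x := 1)
    (by norm_num : (0 : ℝ) < 1 / 2) (by norm_num) le_rfl
  rw [div_one] at hhalf_lt
  linarith
end

section
/- Define f : ℝ → ℝ by f(x) = 0 if x ≤ 0 and f(x) = −x if x > 0. Then: (a) f is convex at 0, i.e., f(s·x) ≤ (1 − s)·f(0) + s·f(x) for all x ∈ ℝ and s ∈ (0,1); (b) Tendsto (fun s => (f(s) − f(0))/s) (𝓝[>] 0) (𝓝 (−1)), so the directional derivative of f at 0 in direction 1 is −1; (c) Tendsto (fun s => (f(−s) − f(0))/s) (𝓝[>] 0) (𝓝 0), so the directional derivative of f at 0 in direction −1 is 0. In particular −Df(0; −1) = 0 > −1 = Df(0; 1), so the inequality −Df(x₀; −X) ≤ Df(x₀; X) can fail for a function that is convex only at the single point x₀. -/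
/-!
Since `f12 x = -max x 0`, the function is positively homogeneous: `f12 (s * x) = s * f12 x`
for `s ≥ 0`. Hence convexity at `0` holds with equality, and the difference quotient
`(f12 (s * v) - f12 0) / s` is the constant `f12 v` for `s > 0`; so the directional derivatives
are `f12 1 = -1` and `f12 (-1) = 0`.
-/

open Filter Topology

noncomputable def f12 : ℝ → ℝ := fun x => if x ≤ 0 then 0 else -x

theorem tendsto_slope_zero_of_pos_homogeneous {g : ℝ → ℝ}
    (hg : ∀ s, 0 < s → ∀ x, g (s * x) = s * g x) (v : ℝ) :
    Tendsto (fun s => (g (s * v) - g 0) / s) (𝓝[>] 0) (𝓝 (g v)) := by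
  have hg0 : g 0 = 0 := by linarith [show g 0 = 2 * g 0 by simpa using hg 2 two_pos 0]
  refine tendsto_const_nhds.congr' (eventually_nhdsWithin_of_forall fun s (hs : 0 < s) => ?_)
  show g v = (g (s * v) - g 0) / s
  rw [hg s hs, hg0, sub_zero, mul_div_cancel_left₀ _ hs.ne']

theorem f12_eq_neg_max (x : ℝ) : f12 x = -max x 0 := by
  unfold f12
  split_ifs with hx
  · simp [max_eq_right hx]
  · simp [max_eq_left (not_le.mp hx).le]

theorem f12_mul_of_nonneg {s : ℝ} (hs : 0 ≤ s) (x : ℝ) : f12 (s * x) = s * f12 x := by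
  rw [f12_eq_neg_max, f12_eq_neg_max, mul_neg, mul_max_of_nonneg _ _ hs, mul_zero]

/-- `f12` is convex at `0`, its directional derivative at `0` in direction `1` is
`-1` and in direction `-1` is `0`; so `-Df(0; -1) = 0 > -1 = Df(0; 1)`. -/
theorem convex_at_point_dirderiv_inequality_fails :
    (∀ x : ℝ, ∀ s ∈ Set.Ioo (0 : ℝ) 1,
        f12 (s * x) ≤ (1 - s) * f12 0 + s * f12 x) ∧
      Tendsto (fun s => (f12 s - f12 0) / s) (𝓝[>] 0) (𝓝 (-1)) ∧
      Tendsto (fun s => (f12 (-s) - f12 0) / s) (𝓝[>] 0) (𝓝 0) := by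
  have hom : ∀ s, 0 < s → ∀ x, f12 (s * x) = s * f12 x := fun s hs => f12_mul_of_nonneg hs.le
  refine ⟨fun x s hs => ?_, ?_, ?_⟩
  · rw [hom s hs.1, f12_eq_neg_max 0, max_self, neg_zero, mul_zero, zero_add]
  · simpa [f12_eq_neg_max] using tendsto_slope_zero_of_pos_homogeneous hom 1
  · simpa [f12_eq_neg_max] using tendsto_slope_zero_of_pos_homogeneous hom (-1)
end

section
/- Define f : ℝ → ℝ by f(x) = 1 if x ≤ 1 and f(x) = −log x if x > 1. Then: (a) for every y > 0 and every s ∈ [0,1], f(y^s) ≤ (1 − s)·f(1) + s·f(y) = (1 − s) + s·f(y), i.e., f is convex at the point 1 along the geodesics γ(s) = y^s of the Hadamard manifold ℝ_{>0} with metric ⟨v,w⟩_x = vw/x²; (b) Tendsto (fun s => (f(2^s) − f(1))/s) (𝓝[>] 0) atBot, i.e., the directional derivative of f at 1 in the direction of the geodesic s ↦ 2^s does not exist (the difference quotient tends to −∞). Hence a function convex at a single point of a Hadamard manifold need not be directionally differentiable there. -/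
open Filter Topology Real

/-! For `y > 1` and `s > 0` one has `f13 (y ^ s) = -s log y = s * f13 y`, so along each geodesic
the value drops from `f13 1 = 1` to something below the chord, which gives convexity at `1`;
but the same jump of size `1` at `s = 0` makes the difference quotient along `s ↦ 2 ^ s`
behave like `-1 / s`. -/

noncomputable def f13 : ℝ → ℝ := fun x => if x ≤ 1 then 1 else -Real.log x

lemma f13_of_le_one {x : ℝ} (hx : x ≤ 1) : f13 x = 1 := if_pos hx

lemma f13_of_one_lt {x : ℝ} (hx : 1 < x) : f13 x = -log x := if_neg hx.not_ge

lemma f13_rpow_of_one_lt {y s : ℝ} (hy : 1 < y) (hs : 0 < s) : f13 (y ^ s) = s * f13 y := by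
  rw [f13_of_one_lt (one_lt_rpow hy hs), f13_of_one_lt hy, log_rpow (by positivity)]
  ring

lemma f13_rpow_le {y s : ℝ} (hy : 0 < y) (hs : s ∈ Set.Icc (0 : ℝ) 1) :
    f13 (y ^ s) ≤ (1 - s) * f13 1 + s * f13 y := by
  obtain ⟨hs0, hs1⟩ := hs
  rw [f13_of_le_one le_rfl]
  rcases le_or_gt y 1 with hy1 | hy1
  · rw [f13_of_le_one (rpow_le_one hy.le hy1 hs0), f13_of_le_one hy1]
    linarith
  · rcases hs0.eq_or_lt with rfl | hs0
    · simp [f13_of_le_one]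
    · rw [f13_rpow_of_one_lt hy1 hs0]
      linarith

lemma f13_two_rpow_slope {s : ℝ} (hs : 0 < s) :
    (f13 ((2 : ℝ) ^ s) - f13 1) / s = f13 2 - s⁻¹ := by
  rw [f13_rpow_of_one_lt one_lt_two hs, f13_of_le_one le_rfl]
  field_simp

/-- `f13` is convex at the point `1` along all geodesics `s ↦ y^s`, yet its
difference quotient at `1` along the geodesic `s ↦ 2^s` tends to `-∞`, so `f13`
is not directionally differentiable at `1`. (Counterexample to Remark 2.1(i) of
S.-L. Chen.) -/
theorem convex_at_point_not_dirdifferentiable :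
    (∀ y : ℝ, 0 < y → ∀ s ∈ Set.Icc (0 : ℝ) 1,
        f13 (y ^ s) ≤ (1 - s) * f13 1 + s * f13 y) ∧
      Tendsto (fun s : ℝ => (f13 ((2 : ℝ) ^ s) - f13 1) / s) (𝓝[>] 0) atBot := by
  refine ⟨fun y hy s hs => f13_rpow_le hy hs, ?_⟩
  have hslope : (fun s : ℝ => f13 2 - s⁻¹) =ᶠ[𝓝[>] 0] fun s => (f13 ((2 : ℝ) ^ s) - f13 1) / s :=
    eventually_nhdsWithin_of_forall fun s hs => (f13_two_rpow_slope hs).symm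
  exact (tendsto_atBot_add_const_left _ _
    (tendsto_neg_atTop_atBot.comp tendsto_inv_nhdsGT_zero)).congr' hslope
end

section
/- Define w : ℝ → ℝ by w(s) = (π/2)·(1 + s) if s is rational (i.e., s ∈ Set.range ((↑) : ℚ → ℝ)) and w(s) = (π/2)·(1 − s) if s is irrational. Then: (a) there is no L ∈ ℝ with Tendsto (fun s => (w(s) − w(0))/s) (𝓝[>] 0) (𝓝 L), i.e., the half-width function is not directionally differentiable; (b) Tendsto (fun s => |w(s) − w(0)|/s) (𝓝[>] 0) (𝓝 (π/2)). Consequently, for the interval-valued function with constant center c ≡ 0 and half-width w, the gH-difference quotient endpoints (−|w(s) − w(0)|/s and |w(s) − w(0)|/s) converge to −π/2 and π/2 respectively, so the gH-directional derivative exists and equals ⟨0, π/2⟩ even though the half-width (and hence the endpoint functions) are not directionally differentiable. -/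
/-! The slope `(w(s) - w(0))/s` is `π/2` at rational and `-π/2` at irrational `s`, and both kinds
of points accumulate at `0` from the right, so the slope has no limit; its absolute value,
however, is constantly `π/2`. -/

open Filter Topology Real Classical

/-- Half-width function: `w(s) = (π/2)(1+s)` for rational `s`,
`w(s) = (π/2)(1-s)` for irrational `s`. -/
noncomputable def w14 : ℝ → ℝ := fun s =>
  if s ∈ Set.range ((↑) : ℚ → ℝ) then (π / 2) * (1 + s) else (π / 2) * (1 - s)

lemma Dense.frequently_nhdsGT {α : Type*} [TopologicalSpace α] [LinearOrder α] [OrderTopology α]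
    [DenselyOrdered α] [NoMaxOrder α] {S : Set α} (hS : Dense S) (a : α) :
    ∃ᶠ x in 𝓝[>] a, x ∈ S :=
  (nhdsGT_basis a).frequently_iff.2 fun _ hb =>
    let ⟨x, hxS, hx⟩ := hS.exists_between hb; ⟨x, hx, hxS⟩

lemma w14_zero : w14 0 = π / 2 := by
  rw [w14, if_pos ⟨0, Rat.cast_zero⟩, add_zero, mul_one]

lemma w14_sub_w14_zero_of_mem_range {s : ℝ} (hs : s ∈ Set.range ((↑) : ℚ → ℝ)) :
    w14 s - w14 0 = π / 2 * s := by
  rw [w14_zero, w14, if_pos hs]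
  ring

lemma w14_sub_w14_zero_of_irrational {s : ℝ} (hs : Irrational s) :
    w14 s - w14 0 = -(π / 2 * s) := by
  rw [w14_zero, w14, if_neg hs]
  ring

lemma abs_w14_sub_w14_zero (s : ℝ) : |w14 s - w14 0| = π / 2 * |s| := by
  by_cases hs : s ∈ Set.range ((↑) : ℚ → ℝ)
  · rw [w14_sub_w14_zero_of_mem_range hs, abs_mul, abs_of_pos (by positivity)]
  · rw [w14_sub_w14_zero_of_irrational hs, abs_neg, abs_mul, abs_of_pos (by positivity)]

lemma w14_slope_of_mem_range {s : ℝ} (hs : s ∈ Set.range ((↑) : ℚ → ℝ)) (h0 : s ≠ 0) :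
    (w14 s - w14 0) / s = π / 2 := by
  rw [w14_sub_w14_zero_of_mem_range hs, mul_div_cancel_right₀ _ h0]

lemma w14_slope_of_irrational {s : ℝ} (hs : Irrational s) : (w14 s - w14 0) / s = -(π / 2) := by
  rw [w14_sub_w14_zero_of_irrational hs, neg_div, mul_div_cancel_right₀ _ hs.ne_zero]

/-- The half-width function `w14` is not directionally differentiable at `0`,
yet `|w14(s) - w14(0)|/s → π/2`, so the gH-directional derivative of the
interval-valued function with center `0` and half-width `w14` exists and equals
`⟨0, π/2⟩`. (The necessary part of Lemma 3.2 of S.-L. Chen fails.) -/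
theorem gH_differentiable_but_halfwidth_not :
    (¬∃ L : ℝ, Tendsto (fun s => (w14 s - w14 0) / s) (𝓝[>] 0) (𝓝 L)) ∧
      Tendsto (fun s => |w14 s - w14 0| / s) (𝓝[>] 0) (𝓝 (π / 2)) := by
  constructor
  · rintro ⟨L, hL⟩
    have h_ne : ∀ᶠ s in 𝓝[>] (0 : ℝ), s ≠ 0 := eventually_mem_nhdsWithin.mono fun _ hs => hs.ne'
    have h_rat : L = π / 2 := tendsto_nhds_unique_of_frequently_eq hL tendsto_const_nhds <|
      ((Dense.frequently_nhdsGT Rat.denseRange_cast 0).and_eventually h_ne).mono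
        fun _ hs => w14_slope_of_mem_range hs.1 hs.2
    have h_irr : L = -(π / 2) := tendsto_nhds_unique_of_frequently_eq hL tendsto_const_nhds <|
      (dense_irrational.frequently_nhdsGT 0).mono fun _ hs => w14_slope_of_irrational hs
    linarith [pi_pos]
  · refine tendsto_const_nhds.congr' <| eventually_mem_nhdsWithin.mono fun s (hs : 0 < s) => ?_
    show π / 2 = |w14 s - w14 0| / s
    rw [abs_w14_sub_w14_zero, abs_of_pos hs, mul_div_cancel_right₀ _ hs.ne']
end

section
/- Define p, q : ℝ → ℝ by p(s) = 0 if s is rational and p(s) = s·log 4 if s is irrational, and q(s) = 4^s − 1 if s is rational and q(s) = (s·log 4)² if s is irrational. Then: (a) there is no L ∈ ℝ with Tendsto (fun s => p(s)/s) (𝓝[>] 0) (𝓝 L); (b) there is no L ∈ ℝ with Tendsto (fun s => q(s)/s) (𝓝[>] 0) (𝓝 L); (c) Tendsto (fun s => min (p(s)) (q(s)) / s) (𝓝[>] 0) (𝓝 0); (d) Tendsto (fun s => max (p(s)) (q(s)) / s) (𝓝[>] 0) (𝓝 (log 4)). Hence the gH-difference quotient [min(p(s), q(s))/s, max(p(s),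 q(s))/s] converges to the interval [0, log 4] although neither endpoint difference quotient p(s)/s nor q(s)/s converges. -/
open Filter Topology Real Classical

/-- Lower endpoint increment along the geodesic `γ(s) = 2^s I₂`. -/
noncomputable def p15 : ℝ → ℝ := fun s =>
  if s ∈ Set.range ((↑) : ℚ → ℝ) then 0 else s * Real.log 4

/-- Upper endpoint increment along the geodesic `γ(s) = 2^s I₂`. -/
noncomputable def q15 : ℝ → ℝ := fun s =>
  if s ∈ Set.range ((↑) : ℚ → ℝ) then (4 : ℝ) ^ s - 1 else (s * Real.log 4) ^ 2

/-!
On the rationals `p(s)/s = 0` and `q(s)/s = (4^s - 1)/s → log 4`; on the irrationals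
`p(s)/s = log 4` and `q(s)/s = s (log 4)² → 0`. Both sets accumulate at `0⁺`, so neither
quotient converges, while on each of them `{p(s)/s, q(s)/s}` tends to `{0, log 4}`, so the
minimum and the maximum converge.
-/

theorem Filter.NeBot.nhdsWithin_inf_principal_of_dense {X : Type*} [TopologicalSpace X]
    {U S : Set X} {x : X} (hU : IsOpen U) (hS : Dense S) [(𝓝[U] x).NeBot] :
    (𝓝[U] x ⊓ 𝓟 S).NeBot := by
  rw [← nhdsWithin_inter', ← mem_closure_iff_nhdsWithin_neBot]
  exact closure_minimal (hS.open_subset_closure_inter hU) isClosed_closure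
    (mem_closure_iff_nhdsWithin_neBot.mpr ‹_›)

theorem not_tendsto_ite_of_ne {X Y : Type*} [TopologicalSpace Y] [T2Space Y] {l : Filter X}
    {S : Set X} [DecidablePred (· ∈ S)] [(l ⊓ 𝓟 S).NeBot] [(l ⊓ 𝓟 Sᶜ).NeBot] {f g : X → Y}
    {a b : Y} (hf : Tendsto f l (𝓝 a)) (hg : Tendsto g l (𝓝 b)) (hab : a ≠ b) (c : Y) :
    ¬Tendsto (fun x => if x ∈ S then f x else g x) l (𝓝 c) := by
  intro h
  have hfc : Tendsto f (l ⊓ 𝓟 S) (𝓝 c) :=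
    (h.mono_left inf_le_left).congr' <| eventually_inf_principal.mpr <|
      Eventually.of_forall fun x hx => if_pos hx
  have hgc : Tendsto g (l ⊓ 𝓟 Sᶜ) (𝓝 c) :=
    (h.mono_left inf_le_left).congr' <| eventually_inf_principal.mpr <|
      Eventually.of_forall fun x hx => if_neg hx
  exact hab <| (tendsto_nhds_unique (hf.mono_left inf_le_left) hfc).trans
    (tendsto_nhds_unique hgc (hg.mono_left inf_le_left))

theorem Real.tendsto_rpow_sub_one_div_nhdsNE {b : ℝ} (hb : 0 < b) :
    Tendsto (fun s : ℝ => (b ^ s - 1) / s) (𝓝[≠] 0) (𝓝 (log b)) := by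
  have hderiv : HasDerivAt (fun s : ℝ => b ^ s) (log b) 0 := by
    simpa using (Real.hasStrictDerivAt_const_rpow hb 0).hasDerivAt
  refine (hasDerivAt_iff_tendsto_slope.mp hderiv).congr fun s => ?_
  simp [slope_def_field]

section

variable {s : ℝ}

theorem p15_div_eq (hs : s ≠ 0) :
    p15 s / s = if s ∈ Set.range ((↑) : ℚ → ℝ) then 0 else log 4 := by
  unfold p15
  split_ifs
  · exact zero_div s
  · field_simp

theorem q15_div_eq (hs : s ≠ 0) :
    q15 s / s =
      if s ∈ Set.range ((↑) : ℚ → ℝ) then ((4 : ℝ) ^ s - 1) / s else s * log 4 ^ 2 := by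
  unfold q15
  split_ifs
  · rfl
  · field_simp

theorem min_p15_q15_div_eq (hs : 0 < s) :
    min (p15 s) (q15 s) / s = if s ∈ Set.range ((↑) : ℚ → ℝ) then min 0 (((4 : ℝ) ^ s - 1) / s)
      else min (log 4) (s * log 4 ^ 2) := by
  rw [← min_div_div_right hs.le, p15_div_eq hs.ne', q15_div_eq hs.ne', apply_ite₂ min]

theorem max_p15_q15_div_eq (hs : 0 < s) :
    max (p15 s) (q15 s) / s = if s ∈ Set.range ((↑) : ℚ → ℝ) then max 0 (((4 : ℝ) ^ s - 1) / s)
      else max (log 4) (s * log 4 ^ 2) := by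
  rw [← max_div_div_right hs.le, p15_div_eq hs.ne', q15_div_eq hs.ne', apply_ite₂ max]

end

instance : (𝓝[>] (0 : ℝ) ⊓ 𝓟 (Set.range ((↑) : ℚ → ℝ))).NeBot :=
  .nhdsWithin_inf_principal_of_dense isOpen_Ioi Rat.denseRange_cast

instance : (𝓝[>] (0 : ℝ) ⊓ 𝓟 (Set.range ((↑) : ℚ → ℝ))ᶜ).NeBot :=
  .nhdsWithin_inf_principal_of_dense isOpen_Ioi dense_irrational

/-- Neither endpoint difference quotient converges, but the gH-difference
quotient `[min(p,q)/s, max(p,q)/s]` converges to `[0, log 4]`. (Counterexample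
to the necessity claim in Lemma 3.2 of S.-L. Chen.) -/
theorem gH_converges_endpoints_do_not :
    (¬∃ L : ℝ, Tendsto (fun s => p15 s / s) (𝓝[>] 0) (𝓝 L)) ∧
      (¬∃ L : ℝ, Tendsto (fun s => q15 s / s) (𝓝[>] 0) (𝓝 L)) ∧
      Tendsto (fun s => min (p15 s) (q15 s) / s) (𝓝[>] 0) (𝓝 0) ∧
      Tendsto (fun s => max (p15 s) (q15 s) / s) (𝓝[>] 0) (𝓝 (Real.log 4)) := by
  have hlog : 0 < log 4 := log_pos (by norm_num)
  have hpos : ∀ᶠ s in 𝓝[>] (0 : ℝ), 0 < s := self_mem_nhdsWithin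
  have hp := hpos.mono fun s hs => p15_div_eq hs.ne'
  have hq := hpos.mono fun s hs => q15_div_eq hs.ne'
  have hrpow := (tendsto_rpow_sub_one_div_nhdsNE (b := 4) (by norm_num)).mono_left
    (nhdsGT_le_nhdsNE 0)
  have hlin : Tendsto (fun s : ℝ => s * log 4 ^ 2) (𝓝[>] 0) (𝓝 0) :=
    ((continuous_id.mul continuous_const).tendsto' 0 0 (zero_mul _)).mono_left nhdsWithin_le_nhds
  refine ⟨?_, ?_, ?_, ?_⟩
  · rintro ⟨L, hL⟩
    exact not_tendsto_ite_of_ne tendsto_const_nhds tendsto_const_nhds hlog.ne L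
      (hL.congr' hp)
  · rintro ⟨L, hL⟩
    exact not_tendsto_ite_of_ne hrpow hlin hlog.ne' L (hL.congr' hq)
  · refine Tendsto.congr' (hpos.mono fun s hs => (min_p15_q15_div_eq hs).symm) ?_
    refine .if' ?_ ?_
    · simpa [hlog.le] using (tendsto_const_nhds (x := (0 : ℝ))).min hrpow
    · simpa [hlog.le] using (tendsto_const_nhds (x := log 4)).min hlin
  · refine Tendsto.congr' (hpos.mono fun s hs => (max_p15_q15_div_eq hs).symm) ?_
    refine .if' ?_ ?_
    · simpa [hlog.le] using (tendsto_const_nhds (x := (0 : ℝ))).max hrpow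
    · simpa [hlog.le] using (tendsto_const_nhds (x := log 4)).max hlin
end

section
/- Let f_c, f_w : ℝ → ℝ both be convex at 0 on [0,1] (i.e., g(s·x) ≤ (1 − s)·g(0) + s·g(x) for all x ∈ [0,1], s ∈ (0,1), for g = f_c and g = f_w), and let f_w be monotone nondecreasing on [0,1]. Then the gH-difference quotient Q(s) = ⟨(f_c(s) − f_c(0))/s, |f_w(s) − f_w(0)|/s⟩ is nondecreasing with respect to the lexicographic order: for all 0 < s₁ < s₂ ≤ 1, toLex ((f_c(s₁) − f_c(0))/s₁, |f_w(s₁) − f_w(0)|/s₁) ≤ toLex ((f_c(s₂) − f_c(0))/s₂, |f_w(s₂) − f_w(0)|/s₂) in ℝ ×ₗ ℝ. -/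
open Set

def ConvexAtZeroOnUnitInterval (g : ℝ → ℝ) : Prop :=
  ∀ x ∈ Icc (0 : ℝ) 1, ∀ s ∈ Ioo (0 : ℝ) 1, g (s * x) ≤ (1 - s) * g 0 + s * g x

theorem ConvexAtZeroOnUnitInterval.sub_div_le_sub_div {g : ℝ → ℝ}
    (hg : ConvexAtZeroOnUnitInterval g)
    {s₁ s₂ : ℝ} (h₁ : 0 < s₁) (h₁₂ : s₁ < s₂) (h₂ : s₂ ≤ 1) :
    (g s₁ - g 0) / s₁ ≤ (g s₂ - g 0) / s₂ := by
  have hs₂ : 0 < s₂ := h₁.trans h₁₂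
  have hconv := hg s₂ ⟨hs₂.le, h₂⟩ (s₁ / s₂) ⟨div_pos h₁ hs₂, (div_lt_one hs₂).mpr h₁₂⟩
  rw [div_mul_cancel₀ _ hs₂.ne'] at hconv
  have hchord : g s₁ - g 0 ≤ s₁ / s₂ * (g s₂ - g 0) := by linarith
  calc (g s₁ - g 0) / s₁ ≤ s₁ / s₂ * (g s₂ - g 0) / s₁ := by gcongr
    _ = (g s₂ - g 0) / s₂ := by field_simp

/-- For a cw-convex interval-valued function (center and half-width both convex
at `0` on `[0,1]`) whose half-width is nondecreasing on `[0,1]`, the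
gH-difference quotient `Q(s) = ⟨(f_c(s)-f_c(0))/s, |f_w(s)-f_w(0)|/s⟩` is
nondecreasing in the lexicographic (≤^min) order. -/
theorem gH_quotient_monotone (fc fw : ℝ → ℝ)
    (hfc : ∀ x ∈ Set.Icc (0 : ℝ) 1, ∀ s ∈ Set.Ioo (0 : ℝ) 1,
      fc (s * x) ≤ (1 - s) * fc 0 + s * fc x)
    (hfw : ∀ x ∈ Set.Icc (0 : ℝ) 1, ∀ s ∈ Set.Ioo (0 : ℝ) 1,
      fw (s * x) ≤ (1 - s) * fw 0 + s * fw x)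
    (hmono : MonotoneOn fw (Set.Icc (0 : ℝ) 1))
    (s₁ s₂ : ℝ) (h₁ : 0 < s₁) (h₁₂ : s₁ < s₂) (h₂ : s₂ ≤ 1) :
    toLex ((fc s₁ - fc 0) / s₁, |fw s₁ - fw 0| / s₁) ≤
      toLex ((fc s₂ - fc 0) / s₂, |fw s₂ - fw 0| / s₂) := by
  have habs : ∀ s ∈ Icc (0 : ℝ) 1, |fw s - fw 0| = fw s - fw 0 := fun s hs =>
    abs_of_nonneg (sub_nonneg.mpr (hmono ⟨le_rfl, zero_le_one⟩ hs hs.1))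
  rw [habs s₁ ⟨h₁.le, h₁₂.le.trans h₂⟩, habs s₂ ⟨h₁.le.trans h₁₂.le, h₂⟩]
  exact Prod.Lex.toLex_mono
    ⟨ConvexAtZeroOnUnitInterval.sub_div_le_sub_div hfc h₁ h₁₂ h₂,
      ConvexAtZeroOnUnitInterval.sub_div_le_sub_div hfw h₁ h₁₂ h₂⟩
end

section
/- Let f_c, f_w : ℝ → ℝ both be convex at 0 on [0,1] (i.e., g(s·x) ≤ (1 − s)·g(0) + s·g(x) for all x ∈ [0,1], s ∈ (0,1), for g = f_c and g = f_w), let f_w be monotone nondecreasing on [0,1], and suppose Tendsto (fun s => (f_c(s) − f_c(0))/s) (𝓝[>] 0) (𝓝 L_c) and Tendsto (fun s => (f_w(s) − f_w(0))/s) (𝓝[>] 0) (𝓝 L_w). Then L_w ≥ 0 and, in the lexicographic order on ℝ × ℝ, toLex (L_c, |L_w|) ≤ toLex (f_c(1) − f_c(0), |f_w(1) − f_w(0)|); i.e., the gH-directional derivative satisfies Df(x₀; X) ≤^min f(x) ⊖_gH f(x₀). -/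
open Filter Topology

/-! Convexity at `0` along the chord to `1` bounds every difference quotient `(g s - g 0) / s`,
`s ∈ (0, 1)`, by the total increment `g 1 - g 0`, so the right derivative at `0` is bounded by it
as well; a nondecreasing half-width has nonnegative difference quotients. Both components of the
derivative are thus dominated componentwise, which implies the lexicographic inequality. -/

lemma le_sub_of_tendsto_slope_of_convex_at_zero {g : ℝ → ℝ} {L : ℝ}
    (hg : ∀ x ∈ Set.Icc (0 : ℝ) 1, ∀ s ∈ Set.Ioo (0 : ℝ) 1, g (s * x) ≤ (1 - s) * g 0 + s * g x)
    (hL : Tendsto (fun s => (g s - g 0) / s) (𝓝[>] 0) (𝓝 L)) :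
    L ≤ g 1 - g 0 := by
  refine le_of_tendsto hL ?_
  filter_upwards [Ioo_mem_nhdsGT zero_lt_one] with s hs
  have hchord : g s ≤ (1 - s) * g 0 + s * g 1 := by
    simpa using hg 1 ⟨zero_le_one, le_rfl⟩ s hs
  rw [div_le_iff₀ hs.1]
  linarith

lemma nonneg_of_tendsto_slope_of_monotoneOn {g : ℝ → ℝ} {L : ℝ}
    (hg : MonotoneOn g (Set.Icc (0 : ℝ) 1))
    (hL : Tendsto (fun s => (g s - g 0) / s) (𝓝[>] 0) (𝓝 L)) :
    0 ≤ L := by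
  refine ge_of_tendsto hL ?_
  filter_upwards [Ioo_mem_nhdsGT zero_lt_one] with s hs
  have hincr : g 0 ≤ g s := hg ⟨le_rfl, zero_le_one⟩ (Set.Ioo_subset_Icc_self hs) hs.1.le
  exact div_nonneg (sub_nonneg.2 hincr) hs.1.le

/-- For a cw-convex interval-valued function with nondecreasing half-width,
the gH-directional derivative satisfies `Df(x₀;X) ≤^min f(x) ⊖_gH f(x₀)`. -/
theorem gH_gradient_inequality (fc fw : ℝ → ℝ) (Lc Lw : ℝ)
    (hfc : ∀ x ∈ Set.Icc (0 : ℝ) 1, ∀ s ∈ Set.Ioo (0 : ℝ) 1,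
      fc (s * x) ≤ (1 - s) * fc 0 + s * fc x)
    (hfw : ∀ x ∈ Set.Icc (0 : ℝ) 1, ∀ s ∈ Set.Ioo (0 : ℝ) 1,
      fw (s * x) ≤ (1 - s) * fw 0 + s * fw x)
    (hmono : MonotoneOn fw (Set.Icc (0 : ℝ) 1))
    (hLc : Tendsto (fun s => (fc s - fc 0) / s) (𝓝[>] 0) (𝓝 Lc))
    (hLw : Tendsto (fun s => (fw s - fw 0) / s) (𝓝[>] 0) (𝓝 Lw)) :
    0 ≤ Lw ∧
      toLex (Lc, |Lw|) ≤ toLex (fc 1 - fc 0, |fw 1 - fw 0|) := by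
  have hLw_nonneg := nonneg_of_tendsto_slope_of_monotoneOn hmono hLw
  have hc := le_sub_of_tendsto_slope_of_convex_at_zero hfc hLc
  have hw := le_sub_of_tendsto_slope_of_convex_at_zero hfw hLw
  exact ⟨hLw_nonneg,
    Prod.Lex.toLex_mono (Prod.mk_le_mk.2 ⟨hc, abs_le_abs_of_nonneg hLw_nonneg hw⟩)⟩
end
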